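/- Let U ⊆ ℂ be an open set, let Ξ₀ : U → ℂ be holomorphic, and let u : U → ℝ be a C² function satisfying Δu = 16|Ξ₀|² e^{2u} on U. Then on the open set U ∖ Ξ₀⁻¹(0), the function v := u + log|Ξ₀| + 2 log 2 satisfies Δv = e^{2v}. -/

import Mathlib

/-!
Away from the zeros of `Ξ₀`, `log ‖Ξ₀‖` is locally the real part of a holomorphic branch of
`log Ξ₀`, hence harmonic, so `Δv = Δu = 16 ‖Ξ₀‖² e^{2u} = e^{2v}`. On `C²` functions `lap` agrees
with Mathlib's Laplacian `Δ`, computed in the orthonormal basis `1, I` of `ℂ`.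
-/

/-- The Euclidean Laplacian `∂²f/∂x² + ∂²f/∂y²` of a function `f : ℂ → ℝ`,
where `ℂ` is identified with `ℝ²` via `z = x + iy`. -/
noncomputable def lap (f : ℂ → ℝ) (z : ℂ) : ℝ :=
  fderiv ℝ (fun w => fderiv ℝ f w 1) z 1 +
    fderiv ℝ (fun w => fderiv ℝ f w Complex.I) z Complex.I

open InnerProductSpace Laplacian

theorem lap_eq_laplacian {f : ℂ → ℝ} {z : ℂ} (hf : ContDiffAt ℝ 2 f z) : lap f z = Δ f z := by
  have hd : DifferentiableAt ℝ (fderiv ℝ f) z :=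
    (hf.fderiv_right (m := 1) (by norm_num)).differentiableAt one_ne_zero
  simp [lap, laplacian_eq_iteratedFDeriv_complexPlane, iteratedFDeriv_two_apply,
    fderiv_clm_apply hd (differentiableAt_const _)]

/-- Part (i) of the key local lemma: if `Ξ₀` is holomorphic on an open set `U` and the
`C²` function `u` satisfies `Δu = 16|Ξ₀|²e^{2u}` on `U`, then on `U \ Ξ₀⁻¹(0)` the function
`v = u + log|Ξ₀| + 2 log 2` satisfies `Δv = e^{2v}`. -/
theorem stmt1 (U : Set ℂ) (hU : IsOpen U) (Ξ₀ : ℂ → ℂ)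
    (hΞ : DifferentiableOn ℂ Ξ₀ U)
    (u : ℂ → ℝ) (hu : ContDiffOn ℝ 2 u U)
    (heq : ∀ z ∈ U, lap u z = 16 * ‖Ξ₀ z‖ ^ 2 * Real.exp (2 * u z)) :
    ∀ z ∈ U \ Ξ₀ ⁻¹' {0},
      lap (fun w => u w + Real.log ‖Ξ₀ w‖ + 2 * Real.log 2) z =
        Real.exp (2 * (u z + Real.log ‖Ξ₀ z‖ + 2 * Real.log 2)) := by
  rintro z ⟨hzU, hz0 : Ξ₀ z ≠ 0⟩
  have hu2 : ContDiffAt ℝ 2 u z := hu.contDiffAt (hU.mem_nhds hzU)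
  have hharm : HarmonicAt (fun w => Real.log ‖Ξ₀ w‖ + 2 * Real.log 2) z :=
    ((hΞ.analyticAt (hU.mem_nhds hzU)).harmonicAt_log_norm hz0).add (harmonicAt_const _)
  have hsplit : (fun w => u w + Real.log ‖Ξ₀ w‖ + 2 * Real.log 2) =
      u + fun w => Real.log ‖Ξ₀ w‖ + 2 * Real.log 2 := by
    funext w
    simp only [Pi.add_apply]
    ring
  have hexp : Real.exp (2 * (u z + Real.log ‖Ξ₀ z‖ + 2 * Real.log 2)) =
      16 * ‖Ξ₀ z‖ ^ 2 * Real.exp (2 * u z) := by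
    have hnorm : 0 < ‖Ξ₀ z‖ := norm_pos_iff.mpr hz0
    rw [show 2 * (u z + Real.log ‖Ξ₀ z‖ + 2 * Real.log 2) =
        2 * u z + Real.log (2 ^ 4 * ‖Ξ₀ z‖ ^ 2) by
      rw [Real.log_mul (by positivity) (by positivity), Real.log_pow, Real.log_pow]
      push_cast
      ring]
    rw [Real.exp_add, Real.exp_log (by positivity)]
    ring
  rw [hsplit, lap_eq_laplacian (f := u + _) (hu2.add hharm.1), hu2.laplacian_add hharm.1,
    hharm.2.eq_of_nhds, ← lap_eq_laplacian hu2, heq z hzU, Pi.zero_apply, add_zero, hexp]
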